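/- Suppose the affine span of z(𝒢_k) is all of ℝⁿ (so the convex hull C of z(𝒢_k) is top-dimensional) and the target t lies in the (topological) interior of C. Then there exists a unique θ̂ ∈ ℝⁿ such that L(θ̂) = sup_{θ ∈ ℝⁿ} L(θ). -/

import Mathlib

/-!
The log-likelihood is `ℓ θ = ⟪θ, t⟫ - A θ` with `A` the log-partition function, and `L = exp ∘ ℓ`
has the same maximizers. If the closed ball of radius `ε` about `t` lies in the convex hull of the
statistics, then `t + (ε / ‖θ‖) • θ` is a convex combination of the `z i`, so some `⟪θ, z i⟫`, and
hence `A θ`, is at least `⟪θ, t⟫ + ε * ‖θ‖`. Thus `ℓ θ ≤ -ε * ‖θ‖` tends to `-∞` and `ℓ` attains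
its maximum. The maximizer is unique because `A` is strictly convex: writing the Gibbs weights
`exp (⟪θ, z i⟫ - A θ)`, which sum to one, strict convexity of `exp` makes
`A (a • θ₁ + b • θ₂) < a * A θ₁ + b * A θ₂` unless `⟪θ₁ - θ₂, z i⟫` is constant in `i`, which the
affine span hypothesis forbids for `θ₁ ≠ θ₂`.
-/

open scoped RealInnerProductSpace

open Set Filter

variable {ι E : Type*} [NormedAddCommGroup E] [InnerProductSpace ℝ E]

lemma eq_zero_of_forall_inner_eq {z : ι → E} (hz : affineSpan ℝ (range z) = ⊤) {v : E}
    (hv : ∀ i j, ⟪v, z i⟫ = ⟪v, z j⟫) : v = 0 := by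
  have hspan : vectorSpan ℝ (range z) = ⊤ := by
    rw [← direction_affineSpan, hz, AffineSubspace.direction_top]
  have hker : vectorSpan ℝ (range z) ≤ LinearMap.ker (innerₗ E v) := by
    rw [vectorSpan_def, Submodule.span_le]
    rintro _ ⟨_, ⟨i, rfl⟩, _, ⟨j, rfl⟩, rfl⟩
    simp [inner_sub_right, hv i j]
  exact inner_self_eq_zero.1 (hker (hspan ▸ Submodule.mem_top))

lemma nonempty_of_affineSpan_range_eq_top {z : ι → E} (hz : affineSpan ℝ (range z) = ⊤) :
    Nonempty ι :=
  range_nonempty_iff_nonempty.1 <| (affineSpan_nonempty ℝ).1 <| by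
    rw [hz, AffineSubspace.top_coe]; exact univ_nonempty

variable [Fintype ι]

noncomputable def logPartition (z : ι → E) (θ : E) : ℝ :=
  Real.log (∑ i, Real.exp ⟪θ, z i⟫)

noncomputable def logLikelihood (z : ι → E) (t θ : E) : ℝ :=
  ⟪θ, t⟫ - logPartition z θ

section logPartition

variable (z : ι → E)

lemma sum_exp_inner_pos [Nonempty ι] (θ : E) : 0 < ∑ i, Real.exp ⟪θ, z i⟫ :=
  Finset.sum_pos (fun _ _ => Real.exp_pos _) Finset.univ_nonempty

lemma inner_le_logPartition (θ : E) (i : ι) : ⟪θ, z i⟫ ≤ logPartition z θ := by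
  have : Nonempty ι := ⟨i⟩
  rw [logPartition, Real.le_log_iff_exp_le (sum_exp_inner_pos z θ)]
  exact Finset.single_le_sum (f := fun j => Real.exp ⟪θ, z j⟫) (fun _ _ => (Real.exp_pos _).le)
    (Finset.mem_univ i)

lemma sum_exp_inner_sub_logPartition [Nonempty ι] (θ : E) :
    ∑ i, Real.exp (⟪θ, z i⟫ - logPartition z θ) = 1 := by
  simp_rw [Real.exp_sub, ← Finset.sum_div, logPartition, Real.exp_log (sum_exp_inner_pos z θ)]
  exact div_self (sum_exp_inner_pos z θ).ne'

lemma continuous_logPartition [Nonempty ι] : Continuous (logPartition z) :=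
  (continuous_finsetSum _ fun _ _ => (continuous_id.inner continuous_const).rexp).log
    fun θ => (sum_exp_inner_pos z θ).ne'

end logPartition

theorem strictConvexOn_logPartition {z : ι → E} (hz : affineSpan ℝ (range z) = ⊤) :
    StrictConvexOn ℝ univ (logPartition z) := by
  have := nonempty_of_affineSpan_range_eq_top hz
  refine ⟨convex_univ, fun θ₁ _ θ₂ _ hne a b ha hb hab => ?_⟩
  set A₁ := logPartition z θ₁
  set A₂ := logPartition z θ₂
  set p : ι → ℝ := fun i => ⟪θ₁, z i⟫ - A₁
  set q : ι → ℝ := fun i => ⟪θ₂, z i⟫ - A₂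
  have hsplit : ∀ i, ⟪a • θ₁ + b • θ₂, z i⟫ = (a * A₁ + b * A₂) + (a * p i + b * q i) := by
    intro i
    simp only [p, q, inner_add_left, real_inner_smul_left]
    ring
  have hpq : ∃ i, p i ≠ q i := by
    by_contra! h
    refine hne (sub_eq_zero.1 (eq_zero_of_forall_inner_eq hz fun i j => ?_))
    have hi := h i
    have hj := h j
    simp only [p, q] at hi hj
    rw [inner_sub_left, inner_sub_left]
    linarith
  obtain ⟨i₀, hi₀⟩ := hpq
  have hlt : ∑ i, Real.exp (a * p i + b * q i) < 1 := calc
    _ < ∑ i, (a * Real.exp (p i) + b * Real.exp (q i)) :=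
      Finset.sum_lt_sum (fun _ _ => convexOn_exp.2 trivial trivial ha.le hb.le hab)
        ⟨i₀, Finset.mem_univ _, strictConvexOn_exp.2 trivial trivial hi₀ ha hb hab⟩
    _ = 1 := by
      rw [Finset.sum_add_distrib, ← Finset.mul_sum, ← Finset.mul_sum,
        sum_exp_inner_sub_logPartition, sum_exp_inner_sub_logPartition, mul_one, mul_one, hab]
  have hpos : 0 < ∑ i, Real.exp (a * p i + b * q i) :=
    Finset.sum_pos (fun _ _ => Real.exp_pos _) Finset.univ_nonempty
  rw [logPartition, Finset.sum_congr rfl fun i _ => by rw [hsplit, Real.exp_add], ← Finset.mul_sum]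
  rw [Real.log_mul (Real.exp_pos _).ne' hpos.ne', Real.log_exp, smul_eq_mul, smul_eq_mul]
  linarith [Real.log_neg hpos hlt]

theorem strictConcaveOn_logLikelihood {z : ι → E} (hz : affineSpan ℝ (range z) = ⊤) (t : E) :
    StrictConcaveOn ℝ univ (logLikelihood z t) :=
  (((innerₗ E).flip t).concaveOn convex_univ).sub_strictConvexOn (strictConvexOn_logPartition hz)

lemma logLikelihood_le_neg_mul_norm {z : ι → E} {t : E} {ε : ℝ} (hε : 0 ≤ ε)
    (hball : Metric.closedBall t ε ⊆ convexHull ℝ (range z)) (θ : E) :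
    logLikelihood z t θ ≤ -(ε * ‖θ‖) := by
  set u := (ε / ‖θ‖) • θ
  have hu : t + u ∈ convexHull ℝ (range z) := by
    refine hball ?_
    rw [Metric.mem_closedBall, dist_eq_norm, add_sub_cancel_left, norm_smul, Real.norm_eq_abs,
      abs_div, abs_norm, abs_of_nonneg hε]
    rcases eq_or_ne ‖θ‖ 0 with h | h
    · simp [h, hε]
    · rw [div_mul_cancel₀ _ h]
  have hθu : ⟪θ, u⟫ = ε * ‖θ‖ := by
    rw [real_inner_smul_right, real_inner_self_eq_norm_sq]
    rcases eq_or_ne ‖θ‖ 0 with h | h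
    · simp [h]
    · field_simp
  have hconv : ConvexOn ℝ (convexHull ℝ (range z)) (innerₗ E θ) :=
    (innerₗ E θ).convexOn (convex_convexHull ℝ _)
  obtain ⟨_, ⟨i, rfl⟩, hi⟩ := hconv.exists_ge_of_mem_convexHull (subset_convexHull ℝ _) hu
  have hiA := inner_le_logPartition z θ i
  simp only [innerₗ_apply_apply, inner_add_right, hθu] at hi
  rw [logLikelihood]
  linarith

lemma tendsto_logLikelihood_cocompact [ProperSpace E] {z : ι → E} {t : E}
    (ht : t ∈ interior (convexHull ℝ (range z))) :
    Tendsto (logLikelihood z t) (cocompact E) atBot := by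
  obtain ⟨ε, hε, hball⟩ := Metric.nhds_basis_closedBall.mem_iff.1 (mem_interior_iff_mem_nhds.1 ht)
  exact tendsto_atBot_mono (logLikelihood_le_neg_mul_norm hε.le hball)
    (tendsto_neg_atTop_atBot.comp (tendsto_norm_cocompact_atTop.const_mul_atTop hε))

theorem exists_forall_logLikelihood_le [ProperSpace E] [Nonempty ι] {z : ι → E} {t : E}
    (ht : t ∈ interior (convexHull ℝ (range z))) :
    ∃ θ, ∀ θ', logLikelihood z t θ' ≤ logLikelihood z t θ :=
  ((continuous_id.inner continuous_const).sub (continuous_logPartition z)).exists_forall_ge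
    (tendsto_logLikelihood_cocompact ht)

theorem existsUnique_forall_logLikelihood_le [ProperSpace E] {z : ι → E} {t : E}
    (hz : affineSpan ℝ (range z) = ⊤) (ht : t ∈ interior (convexHull ℝ (range z))) :
    ∃! θ, ∀ θ', logLikelihood z t θ' ≤ logLikelihood z t θ := by
  have := nonempty_of_affineSpan_range_eq_top hz
  obtain ⟨θ, hθ⟩ := exists_forall_logLikelihood_le ht
  exact ⟨θ, hθ, fun θ' hθ' => (strictConcaveOn_logLikelihood hz t).eq_of_isMaxOn
    (isMaxOn_univ_iff.2 hθ') (isMaxOn_univ_iff.2 hθ) trivial trivial⟩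

theorem ergm_interior_implies_unique_MLE_general (k n : ℕ)
    (z : SimpleGraph (Fin k) → EuclideanSpace ℝ (Fin n))
    (t : EuclideanSpace ℝ (Fin n))
    (L : EuclideanSpace ℝ (Fin n) → ℝ)
    (hL : L = fun θ => Real.exp
      (⟪θ, t⟫ - Real.log (∑ g : SimpleGraph (Fin k), Real.exp ⟪θ, z g⟫)))
    (hdim : affineSpan ℝ (Set.range z) = ⊤)
    (ht : t ∈ interior (convexHull ℝ (Set.range z))) :
    ∃! θhat : EuclideanSpace ℝ (Fin n), ∀ θ, L θ ≤ L θhat := by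
  simp only [hL, Real.exp_le_exp]
  exact existsUnique_forall_logLikelihood_le hdim ht

/-- If `C = convexHull(z(𝒢_k))` is top-dimensional and `t ∈ interior C`, then there is a
unique `θhat ∈ ℝⁿ` maximizing the likelihood `L` over `ℝⁿ`. -/
theorem ergm_interior_implies_unique_MLE (k n : ℕ) (hk : 0 < k) (hn : 0 < n)
    (z : SimpleGraph (Fin k) → EuclideanSpace ℝ (Fin n))
    (t : EuclideanSpace ℝ (Fin n))
    (L : EuclideanSpace ℝ (Fin n) → ℝ)
    (hL : L = fun θ => Real.exp
      (⟪θ, t⟫ - Real.log (∑ g : SimpleGraph (Fin k), Real.exp ⟪θ, z g⟫)))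
    (hdim : affineSpan ℝ (Set.range z) = ⊤)
    (ht : t ∈ interior (convexHull ℝ (Set.range z))) :
    ∃! θhat : EuclideanSpace ℝ (Fin n), ∀ θ, L θ ≤ L θhat :=
  ergm_interior_implies_unique_MLE_general k n z t L hL hdim ht
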